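/- arXiv:1408.0805 — 3 statements merged into one kernel-verified Lean document; each statement's English description precedes it below -/
import Mathlib

section
/- Let γ : [0, t] → ℤ be a path (piecewise-constant with unit jumps) in the time interval [0,t] with at most βt jumps, where β > 0 and t ≥ 16. Define a time interval [s−√t, s) ⊆ [0, t/2] to be favorable for γ if for every u ∈ [s−√t, s), the number of jumps of γ during [u, s) is at most 4β|s−u|. Then there exist at least √t/4 − 1 pairwise disjoint favorable intervals for γ contained in [0, t/2]. -/
/-! A greedy scan from right to left: at the current right end `s`, either `[s - ℓ, s)` is
favorable, and we keep it and move on to `s - ℓ`, or some `u ∈ [s - ℓ, s)` sees more than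
`c (s - u)` points of `J` in `[u, s)`, and we skip to `u`. Each skip pays for the time it jumps
over with points of `J`, so `c s ≤ c ℓ (#S + 1) + #J`. With `c = 4β`, `ℓ = √t`, `s = t / 2`
and `#J ≤ β t` this forces `√t ≤ 4 (#S + 1)`. -/

open Finset

theorem card_filter_lt_add_card_filter_Ico {α : Type*} [LinearOrder α] (J : Finset α) {u s : α}
    (hus : u ≤ s) :
    #(J.filter (· < u)) + #(J.filter fun x => u ≤ x ∧ x < s) = #(J.filter (· < s)) := by
  rw [← card_filter_add_card_filter_not (s := J.filter (· < s)) (· < u), filter_filter,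
    filter_filter]
  congr 2 <;> ext x <;> simp only [mem_filter, not_lt]
  · exact and_congr_right fun _ => ⟨fun hx => ⟨hx.trans_le hus, hx⟩, And.right⟩
  · exact and_congr_right fun _ => And.comm

def IsFavorableWindow (J : Finset ℝ) (c ℓ s : ℝ) : Prop :=
  ∀ u ∈ Set.Ico (s - ℓ) s, (#(J.filter fun x => u ≤ x ∧ x < s) : ℝ) ≤ c * (s - u)

/-- `S` is a set of right ends of pairwise disjoint favorable windows inside `[0, s]`. -/
def IsFavorablePacking (J : Finset ℝ) (c ℓ s : ℝ) (S : Finset ℝ) : Prop :=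
  (∀ a ∈ S, ℓ ≤ a ∧ a ≤ s ∧ IsFavorableWindow J c ℓ a) ∧
    (S : Set ℝ).PairwiseDisjoint fun a => Set.Ico (a - ℓ) a

namespace IsFavorablePacking

variable {J : Finset ℝ} {c ℓ s : ℝ} {S : Finset ℝ}

theorem empty : IsFavorablePacking J c ℓ s ∅ := by
  simp [IsFavorablePacking]

theorem mono {u : ℝ} (hS : IsFavorablePacking J c ℓ u S) (hus : u ≤ s) :
    IsFavorablePacking J c ℓ s S :=
  ⟨fun a ha => ⟨(hS.1 a ha).1, (hS.1 a ha).2.1.trans hus, (hS.1 a ha).2.2⟩, hS.2⟩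

theorem insert (hS : IsFavorablePacking J c ℓ (s - ℓ) S) (hℓ : 0 ≤ ℓ) (hℓs : ℓ ≤ s)
    (hs : IsFavorableWindow J c ℓ s) : IsFavorablePacking J c ℓ s (insert s S) := by
  refine ⟨fun a ha => ?_, ?_⟩
  · rcases mem_insert.1 ha with rfl | ha
    · exact ⟨hℓs, le_rfl, hs⟩
    · exact (hS.mono (sub_le_self s hℓ)).1 a ha
  · rw [coe_insert]
    refine hS.2.insert fun a ha _ => Set.disjoint_left.2 fun x hxs hxa => ?_
    linarith [(hS.1 a ha).2.1, hxs.1, hxa.2]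

theorem notMem (hS : IsFavorablePacking J c ℓ (s - ℓ) S) (hℓ : 0 < ℓ) : s ∉ S :=
  fun hs => by linarith [(hS.1 s hs).2.1]

end IsFavorablePacking

theorem exists_of_not_isFavorableWindow {J : Finset ℝ} {c ℓ s : ℝ} (hc : 0 ≤ c)
    (h : ¬ IsFavorableWindow J c ℓ s) :
    ∃ u, s - ℓ ≤ u ∧ u < s ∧ #(J.filter (· < u)) < #(J.filter (· < s)) ∧
      c * s < c * u + #(J.filter (· < s)) - #(J.filter (· < u)) := by
  simp only [IsFavorableWindow, not_forall, not_le] at h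
  obtain ⟨u, ⟨hsu, hus⟩, hcount⟩ := h
  have hsplit := card_filter_lt_add_card_filter_Ico J hus.le
  have hpos : 0 < #(J.filter fun x => u ≤ x ∧ x < s) := by
    exact_mod_cast (mul_nonneg hc (sub_nonneg.2 hus.le)).trans_lt hcount
  refine ⟨u, hsu, hus, by omega, ?_⟩
  rw [← hsplit, Nat.cast_add]
  linarith

theorem exists_isFavorablePacking (J : Finset ℝ) {c ℓ : ℝ} (hc : 0 ≤ c) (hℓ : 0 < ℓ) (s : ℝ) :
    ∃ S, IsFavorablePacking J c ℓ s S ∧ c * s ≤ c * ℓ * (#S + 1) + #(J.filter (· < s)) := by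
  induction hn : #(J.filter (· < s)) + ⌊s / ℓ⌋₊ using Nat.strong_induction_on generalizing s
    with | _ n ih =>
  subst hn
  by_cases hsℓ : s < ℓ
  · refine ⟨∅, .empty, ?_⟩
    have := mul_le_mul_of_nonneg_left hsℓ.le hc
    simp only [card_empty, Nat.cast_zero, zero_add, mul_one]
    exact le_add_of_le_of_nonneg this (Nat.cast_nonneg _)
  rw [not_lt] at hsℓ
  by_cases hfav : IsFavorableWindow J c ℓ s
  · have hfloor : ⌊s / ℓ⌋₊ = ⌊(s - ℓ) / ℓ⌋₊ + 1 := by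
      rw [← Nat.floor_add_one (div_nonneg (sub_nonneg.2 hsℓ) hℓ.le), sub_div,
        div_self hℓ.ne', sub_add_cancel]
    have hcard : #(J.filter (· < s - ℓ)) ≤ #(J.filter (· < s)) :=
      card_le_card (monotone_filter_right J fun _ _ hx => by linarith)
    obtain ⟨S, hS, hbound⟩ := ih _ (by omega) (s - ℓ) rfl
    refine ⟨insert s S, hS.insert hℓ.le hsℓ hfav, ?_⟩
    rw [card_insert_of_notMem (hS.notMem hℓ)]
    have : (#(J.filter (· < s - ℓ)) : ℝ) ≤ #(J.filter (· < s)) := by exact_mod_cast hcard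
    push_cast
    linarith
  · obtain ⟨u, hsu, hus, hcard, hjump⟩ := exists_of_not_isFavorableWindow hc hfav
    have hfloor : ⌊u / ℓ⌋₊ ≤ ⌊s / ℓ⌋₊ :=
      Nat.floor_le_floor (div_le_div_of_nonneg_right hus.le hℓ.le)
    obtain ⟨S, hS, hbound⟩ := ih _ (by omega) u rfl
    exact ⟨S, hS.mono hus.le, by linarith⟩

theorem favorable_intervals_of_path_general
    (t β : ℝ) (ht : 16 ≤ t) (hβ : 0 < β)
    (J : Finset ℝ)
    (hJcard : (J.card : ℝ) ≤ β * t) :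
    ∃ S : Finset ℝ,
      Real.sqrt t / 4 - 1 ≤ (S.card : ℝ) ∧
      (∀ s ∈ S, 0 ≤ s - Real.sqrt t ∧ s ≤ t / 2 ∧
        ∀ u ∈ Set.Ico (s - Real.sqrt t) s,
          ((J.filter (fun x => u ≤ x ∧ x < s)).card : ℝ) ≤ 4 * β * (s - u)) ∧
      (∀ s ∈ S, ∀ s' ∈ S, s ≠ s' →
        Disjoint (Set.Ico (s - Real.sqrt t) s) (Set.Ico (s' - Real.sqrt t) s')) := by
  have hsqrt : 0 < √t := Real.sqrt_pos.2 (by linarith)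
  obtain ⟨S, ⟨hfav, hdisj⟩, hbound⟩ :=
    exists_isFavorablePacking J (by positivity : (0 : ℝ) ≤ 4 * β) hsqrt (t / 2)
  refine ⟨S, ?_, fun s hs => ⟨sub_nonneg.2 (hfav s hs).1, (hfav s hs).2⟩,
    fun s hs s' hs' hss' => hdisj hs hs' hss'⟩
  have hJ : (#(J.filter (· < t / 2)) : ℝ) ≤ β * t :=
    le_trans (by exact_mod_cast card_filter_le J _) hJcard
  have hmain : β * (√t * √t) ≤ β * (√t * (4 * (#S + 1))) := by
    rw [Real.mul_self_sqrt (by linarith)]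
    linarith
  have := le_of_mul_le_mul_left (le_of_mul_le_mul_left hmain hβ) hsqrt
  linarith

/-- A path `γ : ℝ → ℤ` on the time interval `[0,t]` with jump-time set `J ⊆ [0,t]`
(the discontinuity points of `γ` in `[0,t]`), having at most `β t` jumps, admits at
least `√t/4 − 1` pairwise disjoint favorable intervals `[s − √t, s) ⊆ [0, t/2]`,
where `[s − √t, s)` is favorable if for every `u ∈ [s − √t, s)` the number of jumps
of `γ` in `[u, s)` is at most `4 β (s − u)`. -/
theorem favorable_intervals_of_path
    (t β : ℝ) (ht : 16 ≤ t) (hβ : 0 < β)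
    (γ : ℝ → ℤ) (J : Finset ℝ)
    (hJsub : (J : Set ℝ) ⊆ Set.Icc 0 t)
    (hJjump : ∀ x ∈ Set.Icc (0:ℝ) t, x ∈ J ↔ ¬ ContinuousAt γ x)
    (hJcard : (J.card : ℝ) ≤ β * t) :
    ∃ S : Finset ℝ,
      Real.sqrt t / 4 - 1 ≤ (S.card : ℝ) ∧
      (∀ s ∈ S, 0 ≤ s - Real.sqrt t ∧ s ≤ t / 2 ∧
        ∀ u ∈ Set.Ico (s - Real.sqrt t) s,
          ((J.filter (fun x => u ≤ x ∧ x < s)).card : ℝ) ≤ 4 * β * (s - u)) ∧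
      (∀ s ∈ S, ∀ s' ∈ S, s ≠ s' →
        Disjoint (Set.Ico (s - Real.sqrt t) s) (Set.Ico (s' - Real.sqrt t) s')) :=
  favorable_intervals_of_path_general t β ht hβ J hJcard
end

section
/- In the top-down decomposition used to find favorable intervals: if an interval [s−v, s) is non-favorable (i.e., v = inf{u ≥ 0 : J has more than 4βu points in [s−u, s)} satisfies v ≤ √t), then |J ∩ [s−v, s)| ≥ 4βv. Consequently, the total length L of all non-favorable intervals produced by the algorithm satisfies 4βL ≤ |J|, and hence L ≤ t/4 when |J| ≤ βt. -/
open scoped Classical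

/-- In the top-down decomposition: if `v = inf {u ≥ 0 : |J ∩ [s−u, s)| > 4 β u}`
satisfies `v ≤ √t` (a non-favorable interval), then `|J ∩ [s−v, s)| ≥ 4 β v`.
Consequently, for any finite family of pairwise disjoint non-favorable intervals
`[sᵢ − vᵢ, sᵢ)`, the total length `L = ∑ vᵢ` satisfies `4 β L ≤ |J|`, hence
`L ≤ t/4` whenever `|J| ≤ β t`. -/
theorem nonfavorable_intervals_total_length
    (t β : ℝ) (ht : 0 < t) (hβ : 0 < β) (J : Finset ℝ)
    (hJsub : (J : Set ℝ) ⊆ Set.Icc 0 t) :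
    (∀ s v : ℝ,
      v = sInf {u : ℝ | 0 ≤ u ∧
          4 * β * u < ((J.filter (fun x => s - u ≤ x ∧ x < s)).card : ℝ)} →
      v ≤ Real.sqrt t →
      4 * β * v ≤ ((J.filter (fun x => s - v ≤ x ∧ x < s)).card : ℝ)) ∧
    (∀ (m : ℕ) (s v : ℕ → ℝ),
      (∀ i, i < m → 0 ≤ v i) →
      (∀ i, i < m →
        4 * β * v i ≤ ((J.filter (fun x => s i - v i ≤ x ∧ x < s i)).card : ℝ)) →
      (∀ i j, i < m → j < m → i ≠ j →
        Disjoint (Set.Ico (s i - v i) (s i)) (Set.Ico (s j - v j) (s j))) →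
      4 * β * (∑ i ∈ Finset.range m, v i) ≤ (J.card : ℝ) ∧
        ((J.card : ℝ) ≤ β * t → (∑ i ∈ Finset.range m, v i) ≤ t / 4)) := by
  constructor
  · intro s v hv hvt
    set S : Set ℝ := {u : ℝ | 0 ≤ u ∧
        4 * β * u < ((J.filter (fun x => s - u ≤ x ∧ x < s)).card : ℝ)} with hS
    by_cases hne : S.Nonempty
    · have hbdd : BddBelow S := ⟨0, fun u hu => hu.1⟩
      have hv0 : 0 ≤ v := hv ▸ le_csInf hne (fun u hu => hu.1)
      obtain ⟨ε, hε, hεf⟩ : ∃ ε > 0, ∀ x ∈ J, s - x ≤ v + ε → s - x ≤ v := by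
        by_cases hT : (J.filter (fun x => v < s - x)).Nonempty
        · obtain ⟨x0, hx0, hmin⟩ :=
            (J.filter (fun x => v < s - x)).exists_min_image (fun x => s - x) hT
          have h0 : v < s - x0 := (Finset.mem_filter.mp hx0).2
          refine ⟨(s - x0 - v) / 2, by linarith, ?_⟩
          intro x hx hxle
          by_contra hgt
          push_neg at hgt
          have hxT : x ∈ J.filter (fun x => v < s - x) :=
            Finset.mem_filter.mpr ⟨hx, hgt⟩
          have := hmin x hxT
          linarith
        · refine ⟨1, one_pos, fun x hx _ => ?_⟩
          by_contra hgt
          push_neg at hgt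
          exact hT ⟨x, Finset.mem_filter.mpr ⟨hx, hgt⟩⟩
      obtain ⟨u, huS, hult⟩ : ∃ u ∈ S, u < v + ε := by
        apply exists_lt_of_csInf_lt hne
        rw [← hv]; linarith
      have hvu : v ≤ u := hv ▸ csInf_le hbdd huS
      have hsub : (J.filter (fun x => s - u ≤ x ∧ x < s)) ⊆
          (J.filter (fun x => s - v ≤ x ∧ x < s)) := by
        intro x hx
        rw [Finset.mem_filter] at hx ⊢
        refine ⟨hx.1, ?_, hx.2.2⟩
        have := hεf x hx.1 (by linarith [hx.2.1])
        linarith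
      calc 4 * β * v ≤ 4 * β * u := by nlinarith
        _ ≤ ((J.filter (fun x => s - u ≤ x ∧ x < s)).card : ℝ) := le_of_lt huS.2
        _ ≤ _ := by exact_mod_cast Finset.card_le_card hsub
    · rw [Set.not_nonempty_iff_eq_empty] at hne
      rw [hne, Real.sInf_empty] at hv
      rw [hv]
      simpa using (J.filter (fun x => s - (0:ℝ) ≤ x ∧ x < s)).card.cast_nonneg
  · intro m s v hv0 hcard hdisj
    have hdisjF : ∀ i ∈ Finset.range m, ∀ j ∈ Finset.range m, i ≠ j →
        Disjoint (J.filter (fun x => s i - v i ≤ x ∧ x < s i))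
                 (J.filter (fun x => s j - v j ≤ x ∧ x < s j)) := by
      intro i hi j hj hij
      rw [Finset.disjoint_left]
      intro x hxi hxj
      rw [Finset.mem_filter] at hxi hxj
      exact Set.disjoint_left.mp
        (hdisj i j (Finset.mem_range.mp hi) (Finset.mem_range.mp hj) hij)
        (Set.mem_Ico.mpr ⟨hxi.2.1, hxi.2.2⟩) (Set.mem_Ico.mpr ⟨hxj.2.1, hxj.2.2⟩)
    have hsum : ∑ i ∈ Finset.range m,
        (J.filter (fun x => s i - v i ≤ x ∧ x < s i)).card ≤ J.card := by
      rw [← Finset.card_biUnion hdisjF]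
      exact Finset.card_le_card (Finset.biUnion_subset.mpr fun i _ => Finset.filter_subset _ _)
    have key : 4 * β * ∑ i ∈ Finset.range m, v i ≤ (J.card : ℝ) := by
      rw [Finset.mul_sum]
      calc ∑ i ∈ Finset.range m, 4 * β * v i
          ≤ ∑ i ∈ Finset.range m,
              ((J.filter (fun x => s i - v i ≤ x ∧ x < s i)).card : ℝ) :=
            Finset.sum_le_sum fun i hi => hcard i (Finset.mem_range.mp hi)
        _ ≤ (J.card : ℝ) := by exact_mod_cast hsum
    exact ⟨key, fun h => by nlinarith⟩
end

section
/- Let (p(·,·)) be the transition kernel of an irreducible aperiodic discrete-time Markov chain on Λ ∪ {∅} with ∅ absorbing and reached a.s., and let R be its decay parameter, i.e., p^n(A,A) = R^{−n+o(n)}. Suppose the n-step diagonal transition probabilities of the continuous-time semigroup P_ψ (taken as p) satisfy the Ferrari–Kesten–Martínez conditions (H1)–(H3) for some Λ' ⊆ Λ, A' ∈ Λ', ρ < R^{−1}, M, ε > 0. If p = P_ψ is R-positive with R = e^{αψ} and summable left eigenvector ν, then the continuous-time semigroup (P_t)_{t≥0} is α-positive with the same left eigenvector ν: ν P_t = e^{−αt}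 ν for all t ≥ 0, and limsup_{t→∞} e^{αt} P_t(A,A) > 0. -/
open scoped Classical ENNReal
open Filter

/-!
Renormalise to `Q_t = e^{αt} P_t`. Then `ν Q_ψ = ν`, and `R`-positivity of the skeleton makes
`Q_ψ` recurrent: `∑ₙ Q_{nψ}(C, C) = ∞` at every state `C`. Since `Q_t` commutes with `Q_ψ`, each
`ν Q_t` is again `Q_ψ`-invariant. For a recurrent kernel with positive entries any two finite
invariant measures are proportional: their minimum, after scaling both to agree at a state `b`,
satisfies `m Q ≤ m`; the Green function sums the defect `m - m Q` infinitely often, so `m` is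
invariant, and as `Q_ψ(A, b) > 0` the equality at `b` spreads to every state. Hence
`ν Q_t = c(t) ν` with `c` multiplicative, bounded on `[0, ψ]` and `c(ψ) = 1`, which forces
`c ≡ 1`. Finally `e^{αt} P_t(A, A) ≤ 1`, so the limsup along all `t` dominates the limsup along
the skeleton times `nψ`.
-/

section

variable {Λ : Type*}

/-- `μ ↦ μ K`, i.e. `Matrix.vecMul` without the `Fintype` assumption. -/
noncomputable def tsumVecMul (K : Λ → Λ → ℝ≥0∞) : Module.End ℝ≥0∞ (Λ → ℝ≥0∞) where
  toFun μ A := ∑' B, μ B * K B A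
  map_add' μ μ' := by ext A; simp only [Pi.add_apply, add_mul, ENNReal.tsum_add]
  map_smul' c μ := by
    ext A
    simp only [Pi.smul_apply, smul_eq_mul, RingHom.id_apply, mul_assoc, ENNReal.tsum_mul_left]

lemma tsumVecMul_apply (K : Λ → Λ → ℝ≥0∞) (μ : Λ → ℝ≥0∞) (A : Λ) :
    tsumVecMul K μ A = ∑' B, μ B * K B A := rfl

lemma tsumVecMul_single (K : Λ → Λ → ℝ≥0∞) (C : Λ) : tsumVecMul K (Pi.single C 1) = K C := by
  ext A
  simp [tsumVecMul_apply, Pi.single_apply, ite_mul]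

lemma tsumVecMul_tsumVecMul (K₁ K₂ : Λ → Λ → ℝ≥0∞) (μ : Λ → ℝ≥0∞) :
    tsumVecMul K₂ (tsumVecMul K₁ μ) = tsumVecMul (fun A B => ∑' C, K₁ A C * K₂ C B) μ := by
  ext B
  simp only [tsumVecMul_apply, ← ENNReal.tsum_mul_right, ← ENNReal.tsum_mul_left, mul_assoc]
  exact ENNReal.tsum_comm

lemma Module.End.monotone_ennreal (L : Module.End ℝ≥0∞ (Λ → ℝ≥0∞)) : Monotone L := by
  intro μ μ' h
  rw [← add_tsub_cancel_of_le h, map_add]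
  exact le_self_add

noncomputable def green (L : Module.End ℝ≥0∞ (Λ → ℝ≥0∞)) (C : Λ) : ℝ≥0∞ :=
  ∑' n : ℕ, (L ^ n) (Pi.single C 1) C

lemma Module.End.apply_eq_of_le_of_green_eq_top {L : Module.End ℝ≥0∞ (Λ → ℝ≥0∞)}
    {m : Λ → ℝ≥0∞} (hsub : L m ≤ m) {C : Λ} (hmC : m C ≠ ⊤) (hC : green L C = ⊤) :
    L m C = m C := by
  set f := m - L m
  have hdecomp : ∀ n, ∑ k ∈ Finset.range n, (L ^ k) f + (L ^ n) m = m := by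
    intro n
    induction n with
    | zero => simp
    | succ n ih =>
      rw [Finset.sum_range_succ, add_assoc, pow_succ, Module.End.mul_apply, ← map_add,
        tsub_add_cancel_of_le hsub, ih]
  have hsingle : f C • Pi.single C 1 ≤ f := by
    intro A
    by_cases hA : A = C
    · subst hA; simp
    · simp [hA]
  have hpartial : ∀ n, f C * ∑ k ∈ Finset.range n, (L ^ k) (Pi.single C 1) C ≤ m C := by
    intro n
    calc f C * ∑ k ∈ Finset.range n, (L ^ k) (Pi.single C 1) C
        = ∑ k ∈ Finset.range n, (L ^ k) (f C • Pi.single C 1) C := by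
          simp [Finset.mul_sum]
      _ ≤ ∑ k ∈ Finset.range n, (L ^ k) f C :=
          Finset.sum_le_sum fun k _ => (L ^ k).monotone_ennreal hsingle C
      _ ≤ (∑ k ∈ Finset.range n, (L ^ k) f + (L ^ n) m) C := by
          simp only [Pi.add_apply, Finset.sum_apply]; exact le_self_add
      _ = m C := by rw [hdecomp]
  have hf : f C * green L C ≤ m C := by
    rw [green, ENNReal.tsum_eq_iSup_nat, ENNReal.mul_iSup]
    exact iSup_le hpartial
  have hfC : f C = 0 := by
    by_contra h
    rw [hC, ENNReal.mul_top h] at hf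
    exact hmC (top_le_iff.1 hf)
  exact le_antisymm (hsub C) (tsub_eq_zero_iff_le.1 hfC)

lemma eq_of_le_of_tsumVecMul_apply_eq {K : Λ → Λ → ℝ≥0∞} {μ ν : Λ → ℝ≥0∞} {b : Λ}
    (hle : μ ≤ ν) (hK0 : ∀ A, K A b ≠ 0) (hKtop : ∀ A, K A b ≠ ⊤)
    (hfin : tsumVecMul K ν b ≠ ⊤) (heq : tsumVecMul K μ b = tsumVecMul K ν b) : μ = ν := by
  funext A
  by_contra hne
  have hlt : μ A * K A b < ν A * K A b :=
    ENNReal.mul_lt_mul_left (hK0 A) (hKtop A) (lt_of_le_of_ne (hle A) hne)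
  have hμfin : tsumVecMul K μ b ≠ ⊤ := heq ▸ hfin
  exact (ENNReal.tsum_lt_tsum hμfin (fun B => by gcongr; exact hle B) hlt).ne heq

lemma apply_mul_apply_le_of_tsumVecMul_eq_self {K : Λ → Λ → ℝ≥0∞} (hK0 : ∀ A B, K A B ≠ 0)
    (hKtop : ∀ A B, K A B ≠ ⊤) (hgreen : ∀ C, green (tsumVecMul K) C = ⊤)
    {μ ν : Λ → ℝ≥0∞} (hμ : tsumVecMul K μ = μ) (hν : tsumVecMul K ν = ν)
    (hμtop : ∀ A, μ A ≠ ⊤) (hνtop : ∀ A, ν A ≠ ⊤) (A b : Λ) :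
    μ b * ν A ≤ ν b * μ A := by
  set L := tsumVecMul K
  -- both arguments of the minimum take the value `ν b * μ b` at `b`
  set m := (ν b • μ) ⊓ (μ b • ν)
  have hsub : L m ≤ m := by
    refine le_inf ((L.monotone_ennreal inf_le_left).trans ?_)
      ((L.monotone_ennreal inf_le_right).trans ?_) <;> simp [L, map_smul, hμ, hν]
  have hfix : L m = m := funext fun C => L.apply_eq_of_le_of_green_eq_top hsub
    (ne_top_of_le_ne_top (ENNReal.mul_ne_top (hνtop b) (hμtop C)) inf_le_left) (hgreen C)
  have hm : m = μ b • ν := by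
    refine eq_of_le_of_tsumVecMul_apply_eq inf_le_right (fun C => hK0 C b) (fun C => hKtop C b)
      ?_ ?_
    · simpa [L, hν] using ENNReal.mul_ne_top (hμtop b) (hνtop b)
    · change L m b = L (μ b • ν) b
      simp [hfix, hν, m, mul_comm]
  calc μ b * ν A = m A := by rw [hm]; rfl
    _ ≤ ν b * μ A := inf_le_left

lemma apply_mul_apply_eq_of_tsumVecMul_eq_self {K : Λ → Λ → ℝ≥0∞} (hK0 : ∀ A B, K A B ≠ 0)
    (hKtop : ∀ A B, K A B ≠ ⊤) (hgreen : ∀ C, green (tsumVecMul K) C = ⊤)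
    {μ ν : Λ → ℝ≥0∞} (hμ : tsumVecMul K μ = μ) (hν : tsumVecMul K ν = ν)
    (hμtop : ∀ A, μ A ≠ ⊤) (hνtop : ∀ A, ν A ≠ ⊤) (A b : Λ) :
    μ b * ν A = ν b * μ A :=
  le_antisymm (apply_mul_apply_le_of_tsumVecMul_eq_self hK0 hKtop hgreen hμ hν hμtop hνtop A b)
    (apply_mul_apply_le_of_tsumVecMul_eq_self hK0 hKtop hgreen hν hμ hνtop hμtop A b)

section MultiplicativeFunction

variable {c : ℝ → ℝ} {ψ : ℝ}

lemma map_zero_eq_one_of_map_add_eq_mul (hmul : ∀ s t, 0 ≤ s → 0 ≤ t → c (s + t) = c s * c t)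
    (hcψ : c ψ = 1) (hψ : 0 ≤ ψ) : c 0 = 1 := by
  simpa [hcψ] using (hmul ψ 0 hψ le_rfl).symm

lemma map_nat_mul_eq_pow (hmul : ∀ s t, 0 ≤ s → 0 ≤ t → c (s + t) = c s * c t) (hc0 : c 0 = 1)
    {x : ℝ} (hx : 0 ≤ x) (n : ℕ) : c (n * x) = c x ^ n := by
  induction n with
  | zero => simpa using hc0
  | succ n ih =>
    rw [Nat.cast_succ, add_mul, one_mul, hmul _ _ (by positivity) hx, ih, pow_succ]

lemma le_one_of_map_add_eq_mul (hψ : 0 < ψ)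
    (hmul : ∀ s t, 0 ≤ s → 0 ≤ t → c (s + t) = c s * c t) (hcψ : c ψ = 1)
    (hbdd : BddAbove (c '' Set.Icc 0 ψ)) {t : ℝ} (ht : 0 ≤ t) : c t ≤ 1 := by
  have hc0 := map_zero_eq_one_of_map_add_eq_mul hmul hcψ hψ.le
  obtain ⟨C, hC⟩ := hbdd
  -- `n t` is a multiple of `ψ`, where `c = 1`, plus a remainder in `[0, ψ]`
  have hpow : ∀ n : ℕ, c t ^ n ≤ C := by
    intro n
    set k := ⌊n * t / ψ⌋₊
    have hk : k * ψ ≤ n * t := (le_div_iff₀ hψ).1 (Nat.floor_le (by positivity))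
    have hk' : n * t < k * ψ + ψ := by
      have := Nat.lt_floor_add_one (n * t / ψ)
      rw [div_lt_iff₀ hψ] at this
      linarith
    calc c t ^ n = c (k * ψ + (n * t - k * ψ)) := by
          rw [← map_nat_mul_eq_pow hmul hc0 ht, add_sub_cancel]
      _ = c (n * t - k * ψ) := by
          rw [hmul _ _ (by positivity) (by linarith), map_nat_mul_eq_pow hmul hc0 hψ.le, hcψ,
            one_pow, one_mul]
      _ ≤ C := hC ⟨_, ⟨by linarith, by linarith⟩, rfl⟩
  by_contra h
  obtain ⟨n, hn⟩ := pow_unbounded_of_one_lt C (not_le.1 h)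
  exact (hpow n).not_gt hn

lemma eq_one_of_map_add_eq_mul (hψ : 0 < ψ)
    (hmul : ∀ s t, 0 ≤ s → 0 ≤ t → c (s + t) = c s * c t) (hcψ : c ψ = 1)
    (hbdd : BddAbove (c '' Set.Icc 0 ψ)) {t : ℝ} (ht : 0 ≤ t) : c t = 1 := by
  obtain ⟨k, hk⟩ := exists_nat_ge (t / ψ)
  have hkψ : t ≤ k * ψ := (div_le_iff₀ hψ).1 hk
  have hc0 := map_zero_eq_one_of_map_add_eq_mul hmul hcψ hψ.le
  have hprod : c t * c (k * ψ - t) = 1 := by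
    rw [← hmul _ _ ht (by linarith), add_sub_cancel, map_nat_mul_eq_pow hmul hc0 hψ.le, hcψ,
      one_pow]
  have hnonneg : 0 ≤ c t := by
    rw [← add_halves t, hmul _ _ (by linarith) (by linarith)]
    exact mul_self_nonneg _
  refine le_antisymm (le_one_of_map_add_eq_mul hψ hmul hcψ hbdd ht) ?_
  calc 1 = c t * c (k * ψ - t) := hprod.symm
    _ ≤ c t * 1 := mul_le_mul_of_nonneg_left
        (le_one_of_map_add_eq_mul hψ hmul hcψ hbdd (by linarith)) hnonneg
    _ = c t := mul_one _

end MultiplicativeFunction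

lemma tsumVecMul_apply_add_mul_eq {Q : ℝ → Λ → Λ → ℝ≥0∞}
    (hQ : ∀ s ≥ 0, ∀ t ≥ 0, ∀ μ,
      tsumVecMul (Q t) (tsumVecMul (Q s) μ) = tsumVecMul (Q (s + t)) μ)
    {ψ : ℝ} (hψ : 0 ≤ ψ) (hQ0 : ∀ A B, Q ψ A B ≠ 0) (hQtop : ∀ A B, Q ψ A B ≠ ⊤)
    (hgreen : ∀ C, green (tsumVecMul (Q ψ)) C = ⊤) {ν : Λ → ℝ≥0∞}
    (hν : tsumVecMul (Q ψ) ν = ν) (hνtop : ∀ A, ν A ≠ ⊤)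
    (hμtop : ∀ t ≥ 0, ∀ A, tsumVecMul (Q t) ν A ≠ ⊤) {s t : ℝ} (hs : 0 ≤ s) (ht : 0 ≤ t)
    (A : Λ) :
    tsumVecMul (Q (s + t)) ν A * ν A = tsumVecMul (Q s) ν A * tsumVecMul (Q t) ν A := by
  have hfix : tsumVecMul (Q ψ) (tsumVecMul (Q s) ν) = tsumVecMul (Q s) ν := by
    rw [hQ s hs ψ hψ, add_comm, ← hQ ψ hψ s hs, hν]
  have hprop : ν A • tsumVecMul (Q s) ν = tsumVecMul (Q s) ν A • ν := funext fun B =>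
    (apply_mul_apply_eq_of_tsumVecMul_eq_self hQ0 hQtop hgreen hfix hν (hμtop s hs) hνtop B A).symm
  calc tsumVecMul (Q (s + t)) ν A * ν A
      = tsumVecMul (Q t) (ν A • tsumVecMul (Q s) ν) A := by
        rw [map_smul, hQ s hs t ht, Pi.smul_apply, smul_eq_mul, mul_comm]
    _ = tsumVecMul (Q s) ν A * tsumVecMul (Q t) ν A := by
        rw [hprop, map_smul, Pi.smul_apply, smul_eq_mul]

lemma tsum_ofReal_eq_top_of_limsup_pos {v : ℕ → ℝ} (hv0 : ∀ n, 0 ≤ v n)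
    (hv : 0 < limsup v atTop) : ∑' n, ENNReal.ofReal (v n) = ⊤ := by
  by_contra h
  have hsum : Summable v := by
    simpa [ENNReal.toReal_ofReal (hv0 _)] using ENNReal.summable_toReal h
  exact hv.ne' hsum.tendsto_atTop_zero.limsup_eq

lemma limsup_comp_nat_mul_le {f : ℝ → ℝ} {ψ : ℝ} (hψ : 0 < ψ) (hf0 : ∀ t, 0 ≤ f t)
    (hf : IsBoundedUnder (· ≤ ·) atTop f) :
    limsup (fun n : ℕ => f (n * ψ)) atTop ≤ limsup f atTop :=
  limsup_le_limsup_of_le (tendsto_natCast_atTop_atTop.atTop_mul_const hψ)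
    (isCoboundedUnder_le_of_le _ fun _ => hf0 _) hf

section RenormalisedSemigroup

variable {P : ℝ → Λ → Λ → ℝ} {α : ℝ}

def ChapmanKolmogorov (P : ℝ → Λ → Λ → ℝ) : Prop :=
  ∀ s ≥ 0, ∀ t ≥ 0, ∀ A B,
    (Summable fun C => P s A C * P t C B) ∧ ∑' C, P s A C * P t C B = P (s + t) A B

noncomputable def renormKernel (P : ℝ → Λ → Λ → ℝ) (α t : ℝ) : Λ → Λ → ℝ≥0∞ :=
  fun A B => ENNReal.ofReal (Real.exp (α * t) * P t A B)

lemma tsumVecMul_renormKernel_add (hPnn : ∀ t A B, 0 ≤ P t A B) (hsemi : ChapmanKolmogorov P)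
    {s t : ℝ} (hs : 0 ≤ s) (ht : 0 ≤ t) (μ : Λ → ℝ≥0∞) :
    tsumVecMul (renormKernel P α t) (tsumVecMul (renormKernel P α s) μ)
      = tsumVecMul (renormKernel P α (s + t)) μ := by
  rw [tsumVecMul_tsumVecMul]
  congr
  funext A B
  obtain ⟨hsum, heq⟩ := hsemi s hs t ht A B
  have hterm : ∀ C, renormKernel P α s A C * renormKernel P α t C B
      = ENNReal.ofReal (Real.exp (α * (s + t)) * (P s A C * P t C B)) := by
    intro C
    rw [renormKernel, renormKernel, ← ENNReal.ofReal_mul (by have := hPnn s A C; positivity),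
      mul_add, Real.exp_add]
    ring_nf
  rw [tsum_congr hterm, ← ENNReal.ofReal_tsum_of_nonneg
    (fun C => by have := hPnn s A C; have := hPnn t C B; positivity) (hsum.mul_left _),
    tsum_mul_left, heq, renormKernel]

lemma pow_tsumVecMul_renormKernel (hPnn : ∀ t A B, 0 ≤ P t A B) (hsemi : ChapmanKolmogorov P)
    (hP0 : ∀ A B, P 0 A B = if A = B then 1 else 0) {ψ : ℝ} (hψ : 0 ≤ ψ) (n : ℕ) :
    tsumVecMul (renormKernel P α ψ) ^ n = tsumVecMul (renormKernel P α (n * ψ)) := by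
  induction n with
  | zero =>
    ext μ A
    simp [tsumVecMul_apply, renormKernel, hP0, apply_ite ENNReal.ofReal]
  | succ n ih =>
    ext μ A
    rw [pow_succ', Module.End.mul_apply, ih, tsumVecMul_renormKernel_add hPnn hsemi
      (by positivity) hψ, Nat.cast_succ, add_one_mul]

lemma green_renormKernel_eq_top (hPnn : ∀ t A B, 0 ≤ P t A B) (hsemi : ChapmanKolmogorov P)
    (hP0 : ∀ A B, P 0 A B = if A = B then 1 else 0) {ψ : ℝ} (hψ : 0 ≤ ψ) {C : Λ}
    (hR : 0 < limsup (fun n : ℕ => Real.exp (α * ψ * n) * P (n * ψ) C C) atTop) :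
    green (tsumVecMul (renormKernel P α ψ)) C = ⊤ := by
  simp only [green, pow_tsumVecMul_renormKernel hPnn hsemi hP0 hψ, tsumVecMul_single,
    renormKernel]
  convert tsum_ofReal_eq_top_of_limsup_pos (fun n => ?_) hR using 4
  · ring_nf
  · have := hPnn (n * ψ) C C
    positivity

lemma tsumVecMul_renormKernel_ofReal (hPnn : ∀ t A B, 0 ≤ P t A B) {ν : Λ → ℝ}
    (hν0 : ∀ A, 0 ≤ ν A) {t : ℝ} {A : Λ} (hsum : Summable fun B => ν B * P t B A) :
    tsumVecMul (renormKernel P α t) (fun B => ENNReal.ofReal (ν B)) A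
      = ENNReal.ofReal (Real.exp (α * t) * ∑' B, ν B * P t B A) := by
  rw [tsumVecMul_apply, ← tsum_mul_left, ENNReal.ofReal_tsum_of_nonneg
    (fun B => by have := hν0 B; have := hPnn t B A; positivity) (hsum.mul_left _)]
  refine tsum_congr fun B => ?_
  rw [renormKernel, ← ENNReal.ofReal_mul (hν0 B)]
  ring_nf

end RenormalisedSemigroup

section Skeleton

variable {P : ℝ → Λ → Λ → ℝ} {α ψ : ℝ} {ν : Λ → ℝ}

lemma summable_mul_of_le_one (hPnn : ∀ t A B, 0 ≤ P t A B) (hle1 : ∀ t A B, P t A B ≤ 1)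
    (hν : Summable ν) (hνpos : ∀ A, 0 < ν A) (t : ℝ) (A : Λ) :
    Summable fun B => ν B * P t B A :=
  hν.of_nonneg_of_le (fun B => mul_nonneg (hνpos B).le (hPnn t B A))
    fun B => mul_le_of_le_one_right (hνpos B).le (hle1 t B A)

lemma exp_mul_tsum_mul_add (hψ : 0 < ψ) (hPnn : ∀ t A B, 0 ≤ P t A B)
    (hPpos : ∀ A B, 0 < P ψ A B) (hle1 : ∀ t A B, P t A B ≤ 1) (hsemi : ChapmanKolmogorov P)
    (hP0 : ∀ A B, P 0 A B = if A = B then 1 else 0) (hν : Summable ν) (hνpos : ∀ A, 0 < ν A)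
    (hleft : ∀ A, ∑' B, ν B * P ψ B A = Real.exp (-(α * ψ)) * ν A)
    (hRpos : ∀ A, 0 < limsup (fun n : ℕ => Real.exp (α * ψ * n) * P (n * ψ) A A) atTop)
    {s t : ℝ} (hs : 0 ≤ s) (ht : 0 ≤ t) (A : Λ) :
    Real.exp (α * (s + t)) * (∑' B, ν B * P (s + t) B A) * ν A
      = Real.exp (α * s) * (∑' B, ν B * P s B A) * (Real.exp (α * t) * ∑' B, ν B * P t B A) := by
  have hμ : ∀ t A, tsumVecMul (renormKernel P α t) (fun B => ENNReal.ofReal (ν B)) A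
      = ENNReal.ofReal (Real.exp (α * t) * ∑' B, ν B * P t B A) := fun t A =>
    tsumVecMul_renormKernel_ofReal hPnn (fun B => (hνpos B).le)
      (summable_mul_of_le_one hPnn hle1 hν hνpos t A)
  have hνfix : tsumVecMul (renormKernel P α ψ) (fun B => ENNReal.ofReal (ν B))
      = fun B => ENNReal.ofReal (ν B) := by
    funext A
    rw [hμ, hleft, ← mul_assoc, ← Real.exp_add, add_neg_cancel, Real.exp_zero, one_mul]
  have key := tsumVecMul_apply_add_mul_eq
    (fun s hs t ht => tsumVecMul_renormKernel_add hPnn hsemi hs ht) hψ.le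
    (fun A B => (ENNReal.ofReal_pos.2 (mul_pos (Real.exp_pos _) (hPpos A B))).ne')
    (fun _ _ => ENNReal.ofReal_ne_top)
    (fun C => green_renormKernel_eq_top hPnn hsemi hP0 hψ.le (hRpos C))
    hνfix (fun _ => ENNReal.ofReal_ne_top) (fun t _ A => hμ t A ▸ ENNReal.ofReal_ne_top) hs ht A
  have hnn : ∀ t, 0 ≤ Real.exp (α * t) * ∑' B, ν B * P t B A := fun t =>
    mul_nonneg (Real.exp_pos _).le (tsum_nonneg fun B => mul_nonneg (hνpos B).le (hPnn t B A))
  rwa [hμ, hμ, hμ, ← ENNReal.ofReal_mul (hnn _), ← ENNReal.ofReal_mul (hnn _),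
    ENNReal.ofReal_eq_ofReal_iff (mul_nonneg (hnn _) (hνpos A).le)
      (mul_nonneg (hnn _) (hnn _))] at key

lemma exp_mul_tsum_mul_eq (hψ : 0 < ψ) (hPnn : ∀ t A B, 0 ≤ P t A B)
    (hPpos : ∀ A B, 0 < P ψ A B) (hle1 : ∀ t A B, P t A B ≤ 1) (hsemi : ChapmanKolmogorov P)
    (hP0 : ∀ A B, P 0 A B = if A = B then 1 else 0) (hν : Summable ν) (hνpos : ∀ A, 0 < ν A)
    (hleft : ∀ A, ∑' B, ν B * P ψ B A = Real.exp (-(α * ψ)) * ν A)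
    (hRpos : ∀ A, 0 < limsup (fun n : ℕ => Real.exp (α * ψ * n) * P (n * ψ) A A) atTop)
    {t : ℝ} (ht : 0 ≤ t) (A : Λ) :
    Real.exp (α * t) * ∑' B, ν B * P t B A = ν A := by
  set c : ℝ → ℝ := fun t => Real.exp (α * t) * (∑' B, ν B * P t B A) / ν A
  have hνA : ν A ≠ 0 := (hνpos A).ne'
  have hmul : ∀ s t, 0 ≤ s → 0 ≤ t → c (s + t) = c s * c t := by
    intro s t hs ht
    simp only [c]
    rw [div_mul_div_comm, ← exp_mul_tsum_mul_add hψ hPnn hPpos hle1 hsemi hP0 hν hνpos hleft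
      hRpos hs ht A, mul_div_mul_right _ _ hνA]
  have hcψ : c ψ = 1 := by
    simp only [c]
    rw [hleft, ← mul_assoc, ← Real.exp_add, add_neg_cancel, Real.exp_zero, one_mul,
      div_self hνA]
  have hbdd : BddAbove (c '' Set.Icc 0 ψ) := by
    refine ⟨Real.exp (|α| * ψ) * (∑' B, ν B) / ν A, ?_⟩
    rintro _ ⟨t, ⟨ht0, htψ⟩, rfl⟩
    have hexp : Real.exp (α * t) ≤ Real.exp (|α| * ψ) := Real.exp_le_exp.2
      ((mul_le_mul_of_nonneg_right (le_abs_self α) ht0).trans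
        (mul_le_mul_of_nonneg_left htψ (abs_nonneg α)))
    have htsum : ∑' B, ν B * P t B A ≤ ∑' B, ν B :=
      (summable_mul_of_le_one hPnn hle1 hν hνpos t A).tsum_le_tsum
        (fun B => mul_le_of_le_one_right (hνpos B).le (hle1 t B A)) hν
    have : 0 ≤ ∑' B, ν B * P t B A := tsum_nonneg fun B => mul_nonneg (hνpos B).le (hPnn t B A)
    have := hνpos A
    simp only [c]
    gcongr
  simpa [c, div_eq_one_iff_eq hνA] using eq_one_of_map_add_eq_mul hψ hmul hcψ hbdd ht

lemma exp_mul_apply_self_le_one (hPnn : ∀ t A B, 0 ≤ P t A B) (hνpos : ∀ A, 0 < ν A) {t : ℝ}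
    {A : Λ} (hsum : Summable fun B => ν B * P t B A)
    (h : Real.exp (α * t) * ∑' B, ν B * P t B A = ν A) :
    Real.exp (α * t) * P t A A ≤ 1 := by
  have hdiag : ν A * P t A A ≤ ∑' B, ν B * P t B A :=
    hsum.le_tsum A fun B _ => mul_nonneg (hνpos B).le (hPnn t B A)
  refine (mul_le_iff_le_one_left (hνpos A)).1 ?_
  calc Real.exp (α * t) * P t A A * ν A = Real.exp (α * t) * (ν A * P t A A) := by ring
    _ ≤ Real.exp (α * t) * ∑' B, ν B * P t B A := by gcongr
    _ = ν A := h

end Skeleton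

end

theorem skeleton_R_positive_implies_alpha_positive_general
    {Λ : Type*}
    (P : ℝ → Λ → Λ → ℝ) (α ψ : ℝ) (hψ : 0 < ψ)
    (hPnn : ∀ t A A', 0 ≤ P t A A')
    (hPpos : ∀ t > 0, ∀ A A', 0 < P t A A')
    (hProw : ∀ t A, Summable (P t A) ∧ ∑' A', P t A A' ≤ 1)
    (hsemi : ∀ s ≥ 0, ∀ t ≥ 0, ∀ A B,
      (Summable fun C => P s A C * P t C B) ∧
      ∑' C, P s A C * P t C B = P (s + t) A B)
    (hP0 : ∀ A B, P 0 A B = if A = B then 1 else 0)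
    (ν : Λ → ℝ) (hν : Summable ν) (hνpos : ∀ A, 0 < ν A)
    (hleft : ∀ A', (Summable fun B => ν B * P ψ B A') ∧
      ∑' B, ν B * P ψ B A' = Real.exp (-(α * ψ)) * ν A')
    (hRpos : ∀ A : Λ,
      0 < Filter.limsup (fun n : ℕ => Real.exp (α * ψ * n) * P (n * ψ) A A)
        Filter.atTop) :
    (∀ t ≥ 0, ∀ A', (Summable fun B => ν B * P t B A') ∧
      ∑' B, ν B * P t B A' = Real.exp (-(α * t)) * ν A') ∧
    ∀ A : Λ,
      0 < Filter.limsup (fun t : ℝ => Real.exp (α * t) * P t A A)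
        Filter.atTop := by
  have hle1 : ∀ t A B, P t A B ≤ 1 := fun t A B =>
    ((hProw t A).1.le_tsum B fun C _ => hPnn t A C).trans (hProw t A).2
  have hsum := summable_mul_of_le_one hPnn hle1 hν hνpos
  have hinv : ∀ t ≥ 0, ∀ A, Real.exp (α * t) * ∑' B, ν B * P t B A = ν A := fun t ht A =>
    exp_mul_tsum_mul_eq hψ hPnn (hPpos ψ hψ) hle1 hsemi hP0 hν hνpos (fun A => (hleft A).2)
      hRpos ht A
  refine ⟨fun t ht A => ⟨hsum t A, ?_⟩, fun A => ?_⟩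
  · rw [← hinv t ht A, ← mul_assoc, ← Real.exp_add, neg_add_cancel, Real.exp_zero, one_mul]
  · have hbdd : IsBoundedUnder (· ≤ ·) atTop fun t => Real.exp (α * t) * P t A A :=
      ⟨1, eventually_map.2 <| (eventually_ge_atTop 0).mono fun t ht =>
        exp_mul_apply_self_le_one hPnn hνpos (hsum t A) (hinv t ht A)⟩
    calc 0 < limsup (fun n : ℕ => Real.exp (α * ψ * n) * P (n * ψ) A A) atTop := hRpos A
      _ = limsup (fun n : ℕ => Real.exp (α * (n * ψ)) * P (n * ψ) A A) atTop := by
          congr 1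
          funext n
          rw [mul_comm (n : ℝ) ψ, mul_assoc]
      _ ≤ _ := limsup_comp_nat_mul_le (f := fun t => Real.exp (α * t) * P t A A) hψ
          (fun t => mul_nonneg (Real.exp_pos _).le (hPnn t A A)) hbdd

/-- Transfer of positivity from the discrete skeleton to continuous time: if the
irreducible sub-Markovian semigroup `(P_t)` on a countable set `Λ` has Kingman decay
parameter `α`, and its skeleton `p = P_ψ` is `R`-positive with `R = e^{αψ}` and
summable left eigenvector `ν` (`ν P_ψ = e^{−αψ} ν`), then `(P_t)` is `α`-positive
with the same left eigenvector: `ν P_t = e^{−αt} ν` for all `t ≥ 0`, and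
`limsup_{t→∞} e^{αt} P_t(A,A) > 0`. -/
theorem skeleton_R_positive_implies_alpha_positive
    {Λ : Type*} [Countable Λ] [Nonempty Λ]
    (P : ℝ → Λ → Λ → ℝ) (α ψ : ℝ) (hψ : 0 < ψ)
    (hPnn : ∀ t A A', 0 ≤ P t A A')
    (hPpos : ∀ t > 0, ∀ A A', 0 < P t A A')
    (hProw : ∀ t A, Summable (P t A) ∧ ∑' A', P t A A' ≤ 1)
    (hsemi : ∀ s ≥ 0, ∀ t ≥ 0, ∀ A B,
      (Summable fun C => P s A C * P t C B) ∧
      ∑' C, P s A C * P t C B = P (s + t) A B)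
    (hP0 : ∀ A B, P 0 A B = if A = B then 1 else 0)
    (hkingman : ∀ A A', Filter.Tendsto (fun t : ℝ => Real.log (P t A A') / t)
      Filter.atTop (nhds (-α)))
    (ν : Λ → ℝ) (hν : Summable ν) (hνpos : ∀ A, 0 < ν A)
    (hleft : ∀ A', (Summable fun B => ν B * P ψ B A') ∧
      ∑' B, ν B * P ψ B A' = Real.exp (-(α * ψ)) * ν A')
    (hRpos : ∀ A : Λ,
      0 < Filter.limsup (fun n : ℕ => Real.exp (α * ψ * n) * P (n * ψ) A A)
        Filter.atTop) :
    (∀ t ≥ 0, ∀ A', (Summable fun B => ν B * P t B A') ∧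
      ∑' B, ν B * P t B A' = Real.exp (-(α * t)) * ν A') ∧
    ∀ A : Λ,
      0 < Filter.limsup (fun t : ℝ => Real.exp (α * t) * P t A A)
        Filter.atTop :=
  skeleton_R_positive_implies_alpha_positive_general P α ψ hψ hPnn hPpos hProw hsemi hP0 ν hν hνpos
    hleft hRpos
end
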